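/- arXiv:1706.05181 — 5 statements merged into one kernel-verified Lean document; each statement's English description precedes it below -/
import Mathlib

section
/- If H is a minor of G, then the homological dimension of H is at most the homological dimension of G: γ(H) ≤ γ(G). -/
open Finset

/-- Z/2 boundary of a chain represented as a set of simplices. -/
def bdry {V : Type} [DecidableEq V] (c : Finset (Finset V)) : Finset (Finset V) :=
  (c.sup Finset.powerset).filter fun τ =>
    Odd ((c.filter fun σ => τ ⊆ σ ∧ τ.card + 1 = σ.card).card)

def IsChainOf {V : Type} [DecidableEq V] (K : Finset (Finset V)) (d : ℕ)
    (c : Finset (Finset V)) : Prop :=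
  ∀ σ ∈ c, σ ∈ K ∧ σ.card = d + 1

/-- Reduced simplicial Z/2-homology of the complex `K` is nonzero in dimension `d`. -/
def RedHomNonzero {V : Type} [DecidableEq V] (K : Finset (Finset V)) (d : ℕ) : Prop :=
  ∃ c : Finset (Finset V), IsChainOf K d c ∧ bdry c = ∅ ∧
    ∀ b : Finset (Finset V), IsChainOf K (d + 1) b → bdry b ≠ c

/-- The nerve of a finite family of nonempty finite sets. -/
def nerveF {V ι : Type} [DecidableEq V] [Fintype V] [Fintype ι] [DecidableEq ι]
    (F : ι → Finset V) : Finset (Finset ι) :=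
  Finset.univ.filter fun σ : Finset ι => σ.Nonempty ∧ (σ.inf F).Nonempty

/-- `F` is a connected cover in `G`: a family of (vertex sets of) induced subgraphs,
all of whose nonempty intersections induce connected subgraphs. -/
def IsConnCover {V ι : Type} [DecidableEq V] [Fintype V] [Fintype ι] [DecidableEq ι]
    (G : SimpleGraph V) (F : ι → Finset V) : Prop :=
  (∀ i, (F i).Nonempty) ∧
  ∀ σ : Finset ι, σ.Nonempty → (σ.inf F).Nonempty →
    (G.induce ((σ.inf F : Finset V) : Set V)).Connected

/-- The homological dimension of `G` is at least `d`. -/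
def GammaGe {V : Type} [DecidableEq V] [Fintype V] (G : SimpleGraph V) (d : ℕ) : Prop :=
  ∃ (n : ℕ) (F : Fin n → Finset V), IsConnCover G F ∧ RedHomNonzero (nerveF F) d

/-- The homological dimension of `G` equals the integer `m`:
`m` is the greatest `d` with `GammaGe G d` (and `m = -1` when there is none). -/
def HomDimEq {V : Type} [DecidableEq V] [Fintype V] (G : SimpleGraph V) (m : ℤ) : Prop :=
  (∀ d : ℕ, m < (d : ℤ) → ¬ GammaGe G d) ∧ (∀ d : ℕ, (d : ℤ) = m → GammaGe G d)

/-- `H` is a minor of `G`. -/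
def IsMinor {W V : Type} [Fintype W] [DecidableEq W] [Fintype V] [DecidableEq V]
    (H : SimpleGraph W) (G : SimpleGraph V) : Prop :=
  ∃ B : W → Finset V,
    (∀ w, (B w).Nonempty) ∧
    (∀ u w, u ≠ w → Disjoint (B u) (B w)) ∧
    (∀ w, (G.induce ((B w : Finset V) : Set V)).Connected) ∧
    (∀ u w, H.Adj u w → ∃ a ∈ B u, ∃ b ∈ B w, G.Adj a b)



lemma mem_inf_iff {V ι : Type} [DecidableEq V] [Fintype V] {σ : Finset ι}
    (hσ : σ.Nonempty) (F : ι → Finset V) (a : V) :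
    a ∈ σ.inf F ↔ ∀ i ∈ σ, a ∈ F i := by
  rw [← Finset.inf'_eq_inf hσ]; exact Finset.mem_inf' hσ

lemma blowup_connected {V W : Type} [Fintype V] [DecidableEq V] [Fintype W] [DecidableEq W]
    (G : SimpleGraph V) (H : SimpleGraph W) (B : W → Finset V)
    (hB : ∀ w, (B w).Nonempty)
    (hconn : ∀ w, (G.induce ((B w : Finset V) : Set V)).Connected)
    (hadj : ∀ u w, H.Adj u w → ∃ a ∈ B u, ∃ b ∈ B w, G.Adj a b)
    (S : Finset W) (hSne : S.Nonempty)
    (hS : (H.induce ((S : Finset W) : Set W)).Connected) :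
    (G.induce ((S.biUnion B : Finset V) : Set V)).Connected := by
  set U : Set V := ((S.biUnion B : Finset V) : Set V) with hU
  have hmem : ∀ {w : W} {a : V}, w ∈ (S : Set W) → a ∈ B w → a ∈ U := by
    intro w a hw ha
    simp only [hU, Finset.coe_biUnion, Set.mem_iUnion, Finset.mem_coe]
    exact ⟨w, Finset.mem_coe.mp hw, ha⟩
  have step1 : ∀ (x : ((S : Finset W) : Set W)) (a b : V) (ha : a ∈ B x.1) (hb : b ∈ B x.1),
      (G.induce U).Reachable ⟨a, hmem x.2 ha⟩ ⟨b, hmem x.2 hb⟩ := by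
    rintro ⟨w, hw⟩ a b ha hb
    have hsub : ((B w : Finset V) : Set V) ⊆ U := by
      intro x hx
      exact hmem hw (Finset.mem_coe.mp hx)
    have r := (hconn w).preconnected ⟨a, Finset.mem_coe.mpr ha⟩ ⟨b, Finset.mem_coe.mpr hb⟩
    exact r.map (G.induceHomOfLE hsub).toHom
  have step2 : ∀ (x y : ((S : Finset W) : Set W)), H.Adj x.1 y.1 →
      ∀ (a b : V) (ha : a ∈ B x.1) (hb : b ∈ B y.1),
      (G.induce U).Reachable ⟨a, hmem x.2 ha⟩ ⟨b, hmem y.2 hb⟩ := by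
    rintro ⟨w, hw⟩ ⟨w', hw'⟩ hadjww a b ha hb
    obtain ⟨a', ha', b', hb', hGab⟩ := hadj w w' hadjww
    have e : (G.induce U).Adj ⟨a', hmem hw ha'⟩ ⟨b', hmem hw' hb'⟩ := by
      simpa using hGab
    exact ((step1 ⟨w, hw⟩ a a' ha ha').trans e.reachable).trans (step1 ⟨w', hw'⟩ b' b hb' hb)
  have key : ∀ (x y : ((S : Finset W) : Set W))
      (p : (H.induce ((S : Finset W) : Set W)).Walk x y) (a b : V)
      (ha : a ∈ B x.1) (hb : b ∈ B y.1),
      (G.induce U).Reachable ⟨a, hmem x.2 ha⟩ ⟨b, hmem y.2 hb⟩ := by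
    intro x y p
    induction p with
    | nil => intro a b ha hb; exact step1 _ a b ha hb
    | @cons x u y h p ih =>
      intro a b ha hb
      obtain ⟨c, hc⟩ := hB u.1
      have hHxu : H.Adj x.1 u.1 := by simpa using h
      exact (step2 x u hHxu a c ha hc).trans (ih c b hc hb)
  rw [SimpleGraph.connected_iff]
  constructor
  · rintro ⟨v, hv⟩ ⟨v', hv'⟩
    have hv2 := hv
    have hv'2 := hv'
    simp only [hU, Finset.coe_biUnion, Set.mem_iUnion, Finset.mem_coe] at hv2 hv'2
    obtain ⟨w, hw, hvw⟩ := hv2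
    obtain ⟨w', hw', hvw'⟩ := hv'2
    obtain ⟨p⟩ := hS.preconnected ⟨w, Finset.mem_coe.mpr hw⟩ ⟨w', Finset.mem_coe.mpr hw'⟩
    exact key _ _ p v v' hvw hvw'
  · obtain ⟨w, hw⟩ := hSne
    obtain ⟨a, ha⟩ := hB w
    exact ⟨⟨a, hmem (Finset.mem_coe.mpr hw) ha⟩⟩

lemma inf_biUnion_eq {V W ι : Type} [DecidableEq V] [Fintype V] [DecidableEq W] [Fintype W]
    (B : W → Finset V) (hdisj : ∀ u w, u ≠ w → Disjoint (B u) (B w))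
    (F : ι → Finset W) (σ : Finset ι) (hσ : σ.Nonempty) :
    σ.inf (fun i => (F i).biUnion B) = (σ.inf F).biUnion B := by
  ext v
  rw [mem_inf_iff hσ, Finset.mem_biUnion]
  constructor
  · intro hv
    obtain ⟨i0, hi0⟩ := id hσ
    obtain ⟨w0, hw0, hvw0⟩ := Finset.mem_biUnion.mp (hv i0 hi0)
    refine ⟨w0, (mem_inf_iff hσ F w0).mpr ?_, hvw0⟩
    intro i hi
    obtain ⟨w, hw, hvw⟩ := Finset.mem_biUnion.mp (hv i hi)
    rcases eq_or_ne w w0 with rfl | hne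
    · exact hw
    · exact absurd (Finset.disjoint_left.mp (hdisj w w0 hne) hvw) (fun h => h hvw0)
  · rintro ⟨w, hw, hvw⟩ i hi
    exact Finset.mem_biUnion.mpr ⟨w, (mem_inf_iff hσ F w).mp hw i hi, hvw⟩

/-- the homological dimension is minor-monotone: if `H ≺ G` then
`γ(H) ≤ γ(G)`, i.e. whenever `γ(H) ≥ d` also `γ(G) ≥ d`. -/
theorem stmt2 {V W : Type} [Fintype V] [DecidableEq V] [Fintype W] [DecidableEq W]
    (G : SimpleGraph V) (H : SimpleGraph W) (hm : IsMinor H G) :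
    ∀ d : ℕ, GammaGe H d → GammaGe G d := by
  intro d ⟨n, F, ⟨hFne, hFconn⟩, hhom⟩
  obtain ⟨B, hB, hdisj, hconn, hadj⟩ := hm
  refine ⟨n, fun i => (F i).biUnion B, ⟨?_, ?_⟩, ?_⟩
  · intro i
    obtain ⟨w, hw⟩ := hFne i
    obtain ⟨a, ha⟩ := hB w
    exact ⟨a, Finset.mem_biUnion.mpr ⟨w, hw, ha⟩⟩
  · intro σ hσ hne
    rw [inf_biUnion_eq B hdisj F σ hσ] at hne ⊢
    obtain ⟨v, hv⟩ := hne
    obtain ⟨w, hw, -⟩ := Finset.mem_biUnion.mp hv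
    have hSne : (σ.inf F).Nonempty := ⟨w, hw⟩
    exact blowup_connected G H B hB hconn hadj (σ.inf F) hSne (hFconn σ hσ hSne)
  · have : nerveF (fun i => (F i).biUnion B) = nerveF F := by
      ext σ
      simp only [nerveF, Finset.mem_filter, Finset.mem_univ, true_and]
      constructor
      · rintro ⟨hσ, v, hv⟩
        rw [inf_biUnion_eq B hdisj F σ hσ] at hv
        obtain ⟨w, hw, -⟩ := Finset.mem_biUnion.mp hv
        exact ⟨hσ, w, hw⟩
      · rintro ⟨hσ, w, hw⟩
        obtain ⟨a, ha⟩ := hB w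
        exact ⟨hσ, a, (inf_biUnion_eq B hdisj F σ hσ) ▸ Finset.mem_biUnion.mpr ⟨w, hw, ha⟩⟩
    rw [this]
    exact hhom
end

section
/- Let G be a graph with γ(G) ≥ 0. For every integer j with 0 ≤ j ≤ γ(G), there exists a connected cover F in G such that the j-th reduced Z/2-homology of the nerve N(F) is nonzero. -/
open Finset

namespace Stmt4Aux

variable {V : Type} [DecidableEq V]

/-- The set of cofaces of `τ` in the chain `c`. -/
def cof (c : Finset (Finset V)) (τ : Finset V) : Finset (Finset V) :=
  c.filter fun σ => τ ⊆ σ ∧ τ.card + 1 = σ.card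

lemma mem_bdry {c : Finset (Finset V)} {τ : Finset V} :
    τ ∈ bdry c ↔ Odd (cof c τ).card := by
  unfold bdry
  rw [mem_filter]
  constructor
  · exact fun h => h.2
  · intro h
    refine ⟨?_, h⟩
    have hne : (cof c τ).Nonempty := by
      rw [← Finset.card_pos]
      rcases h with ⟨t, ht⟩; omega
    obtain ⟨σ, hσ⟩ := hne
    rw [cof, mem_filter] at hσ
    exact Finset.mem_sup.mpr ⟨σ, hσ.1, Finset.mem_powerset.mpr hσ.2.1⟩

lemma notMem_bdry {c : Finset (Finset V)} {τ : Finset V} (h : bdry c = ∅) :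
    ¬ Odd (cof c τ).card := by
  rw [← mem_bdry]; simp [h]

lemma cof_symmDiff (c d : Finset (Finset V)) (τ : Finset V) :
    cof (symmDiff c d) τ = symmDiff (cof c τ) (cof d τ) := by
  ext σ
  simp only [cof, Finset.mem_symmDiff, mem_filter]
  tauto

lemma card_symmDiff_parity (A B : Finset (Finset V)) :
    (symmDiff A B).card % 2 = (A.card + B.card) % 2 := by
  have h1 : symmDiff A B = (A ∪ B) \ (A ∩ B) := by
    rw [symmDiff]; ext x
    simp only [Finset.mem_union, Finset.mem_sdiff, Finset.mem_inter,
      Finset.sup_eq_union, Finset.mem_union, Finset.mem_sdiff]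
    tauto
  have h2 : (A ∩ B) ⊆ (A ∪ B) := (Finset.inter_subset_left).trans Finset.subset_union_left
  have h3 : ((A ∪ B) \ (A ∩ B)).card = (A ∪ B).card - (A ∩ B).card :=
    Finset.card_sdiff_of_subset h2
  have h4 : (A ∪ B).card + (A ∩ B).card = A.card + B.card :=
    Finset.card_union_add_card_inter A B
  have h5 : (A ∩ B).card ≤ (A ∪ B).card := Finset.card_le_card h2
  rw [h1, h3]
  omega

lemma bdry_symmDiff (c d : Finset (Finset V)) :
    bdry (symmDiff c d) = symmDiff (bdry c) (bdry d) := by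
  ext τ
  rw [Finset.mem_symmDiff, mem_bdry, mem_bdry, mem_bdry, cof_symmDiff,
    Nat.odd_iff, Nat.odd_iff, Nat.odd_iff, card_symmDiff_parity]
  omega

lemma bdry_empty : bdry (∅ : Finset (Finset V)) = ∅ := by
  simp [bdry]

variable {ι κ : Type} [DecidableEq ι] [DecidableEq κ]

/-- Push a chain forward along a map on vertices. -/
def pushC (g : ι → κ) (c : Finset (Finset ι)) : Finset (Finset κ) :=
  c.image (fun τ => τ.image g)

lemma cof_push {g : ι → κ} (hg : Function.Injective g)
    (c : Finset (Finset ι)) (τ : Finset ι) :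
    (cof (pushC g c) (τ.image g)).card = (cof c τ).card := by
  rw [cof, cof, pushC, Finset.filter_image,
    Finset.card_image_of_injective _ (Finset.image_injective hg)]
  congr 1
  apply Finset.filter_congr
  intro σ _
  simp only [Finset.image_subset_image_iff hg, Finset.card_image_of_injective _ hg]

lemma bdry_push {g : ι → κ} (hg : Function.Injective g) (c : Finset (Finset ι)) :
    bdry (pushC g c) = pushC g (bdry c) := by
  ext τ'
  constructor
  · intro h
    have hodd := mem_bdry.mp h
    have hne : (cof (pushC g c) τ').Nonempty := by
      rw [← Finset.card_pos]; rcases hodd with ⟨t, ht⟩; omega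
    obtain ⟨σ', hσ'⟩ := hne
    rw [cof, mem_filter] at hσ'
    obtain ⟨hσ'c, hsub, _⟩ := hσ'
    rw [pushC, mem_image] at hσ'c
    obtain ⟨σ, hσc, rfl⟩ := hσ'c
    set τ : Finset ι := σ.filter (fun i => g i ∈ τ') with hτ
    have hττ' : τ.image g = τ' := by
      ext x
      simp only [hτ, mem_image, mem_filter]
      constructor
      · rintro ⟨i, ⟨hi, hgi⟩, rfl⟩; exact hgi
      · intro hx
        obtain ⟨i, hi, rfl⟩ := mem_image.mp (hsub hx)
        exact ⟨i, ⟨hi, hx⟩, rfl⟩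
    rw [← hττ'] at h ⊢
    rw [pushC, mem_image]
    refine ⟨τ, ?_, rfl⟩
    rw [mem_bdry, ← cof_push hg]
    exact mem_bdry.mp h
  · intro h
    rw [pushC, mem_image] at h
    obtain ⟨τ, hτ, rfl⟩ := h
    rw [mem_bdry, cof_push hg]
    exact mem_bdry.mp hτ

variable [Fintype ι]

/-- Pull back a simplex along a map on vertices. -/
def pback (g : ι → κ) (τ : Finset κ) : Finset ι := univ.filter (fun a => g a ∈ τ)

lemma image_pback {g : ι → κ} {τ : Finset κ} (hsupp : ∀ x ∈ τ, ∃ a, g a = x) :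
    (pback g τ).image g = τ := by
  ext x
  simp only [pback, mem_image, mem_filter, mem_univ, true_and]
  constructor
  · rintro ⟨a, ha, rfl⟩; exact ha
  · intro hx; obtain ⟨a, rfl⟩ := hsupp x hx; exact ⟨a, hx, rfl⟩

lemma card_pback {g : ι → κ} (hg : Function.Injective g) {τ : Finset κ}
    (hsupp : ∀ x ∈ τ, ∃ a, g a = x) : (pback g τ).card = τ.card := by
  conv_rhs => rw [← image_pback hsupp]
  exact (Finset.card_image_of_injective _ hg).symm

lemma pback_nonempty {g : ι → κ} {τ : Finset κ}
    (hsupp : ∀ x ∈ τ, ∃ a, g a = x) (hτ : τ.Nonempty) : (pback g τ).Nonempty := by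
  obtain ⟨x, hx⟩ := hτ
  obtain ⟨a, rfl⟩ := hsupp x hx
  exact ⟨a, by simp [pback, hx]⟩

lemma pushC_pback {g : ι → κ} {c : Finset (Finset κ)}
    (hsupp : ∀ σ ∈ c, ∀ x ∈ σ, ∃ a, g a = x) :
    pushC g (c.image (pback g)) = c := by
  rw [pushC, Finset.image_image]
  have h : ∀ σ ∈ c, ((fun τ => Finset.image g τ) ∘ pback g) σ = σ := by
    intro σ hσ
    exact image_pback (hsupp σ hσ)
  rw [Finset.image_congr (fun σ hσ => h σ hσ)]
  simp

lemma inf_inf_const {α β : Type} [SemilatticeInf α] [OrderTop α] [DecidableEq β]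
    {s : Finset β} (hs : s.Nonempty) (f : β → α) (t : α) :
    s.inf (fun b => f b ⊓ t) = s.inf f ⊓ t := by
  induction hs using Finset.Nonempty.cons_induction with
  | singleton a => simp
  | cons a s ha hs ih =>
    rw [Finset.inf_cons, Finset.inf_cons, ih, inf_inf_inf_comm, inf_idem]

lemma mem_nerveF {W : Type} [DecidableEq W] [Fintype W] {F : ι → Finset W}
    {σ : Finset ι} : σ ∈ nerveF F ↔ σ.Nonempty ∧ (σ.inf F).Nonempty := by
  simp [nerveF]

end Stmt4Aux

open Stmt4Aux

set_option maxHeartbeats 1000000 in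
lemma key_step {V : Type} [Fintype V] [DecidableEq V] (G : SimpleGraph V) (k : ℕ) :
    ∀ n (F : Fin n → Finset V), IsConnCover G F →
      ∀ c : Finset (Finset (Fin n)), IsChainOf (nerveF F) (k + 1) c → bdry c = ∅ →
      (∀ b, IsChainOf (nerveF F) (k + 2) b → bdry b ≠ c) → GammaGe G k := by
  intro n
  induction n using Nat.strong_induction_on with
  | _ n IH =>
  intro F hF c hc hcyc hnb
  classical
  rcases Finset.eq_empty_or_nonempty c with rfl | ⟨σ0, hσ0⟩
  · exact absurd bdry_empty (hnb ∅ (fun σ h => absurd h (Finset.notMem_empty σ)))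
  have hσ0card := (hc σ0 hσ0).2
  have hσ0ne : σ0.Nonempty := by rw [← Finset.card_pos, hσ0card]; omega
  obtain ⟨i0, hi0⟩ := hσ0ne
  obtain ⟨m, rfl⟩ : ∃ m, n = m + 1 := by
    cases n with
    | zero => exact i0.elim0
    | succ m => exact ⟨m, rfl⟩
  have hcK : ∀ σ ∈ c, σ ∈ nerveF F := fun σ h => (hc σ h).1
  have hccard : ∀ σ ∈ c, σ.card = k + 2 := fun σ h => (hc σ h).2
  set c1 := c.filter (fun σ => i0 ∈ σ) with hc1def
  set c2 := c.filter (fun σ => i0 ∉ σ) with hc2def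
  have hc1mem : ∀ σ, σ ∈ c1 ↔ σ ∈ c ∧ i0 ∈ σ := fun σ => Finset.mem_filter
  have hc2mem : ∀ σ, σ ∈ c2 ↔ σ ∈ c ∧ i0 ∉ σ := fun σ => Finset.mem_filter
  have hc12 : symmDiff c1 c2 = c := by
    ext σ
    rw [Finset.mem_symmDiff, hc1mem, hc2mem]
    by_cases h : i0 ∈ σ <;> simp [h]
  have hodd : ∀ τ : Finset (Fin (m + 1)), ¬ Odd (cof c τ).card :=
    fun τ => notMem_bdry hcyc
  have hcof1 : ∀ τ : Finset (Fin (m + 1)), i0 ∈ τ → cof c1 τ = cof c τ := by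
    intro τ hτ
    ext σ
    simp only [cof, mem_filter, hc1def]
    constructor
    · rintro ⟨⟨h1, _⟩, h3, h4⟩; exact ⟨h1, h3, h4⟩
    · rintro ⟨h1, h3, h4⟩; exact ⟨⟨h1, h3 hτ⟩, h3, h4⟩
  set L := c1.image (fun σ => σ.erase i0) with hLdef
  have hLmem : ∀ τ, τ ∈ L ↔ (i0 ∉ τ ∧ insert i0 τ ∈ c1) := by
    intro τ
    rw [hLdef, mem_image]
    constructor
    · rintro ⟨σ, hσ, rfl⟩
      exact ⟨Finset.notMem_erase i0 σ,
        by rw [Finset.insert_erase ((hc1mem σ).mp hσ).2]; exact hσ⟩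
    · rintro ⟨h1, h2⟩
      exact ⟨insert i0 τ, h2, Finset.erase_insert h1⟩
  -- bdry c1 = L
  have hbc1 : bdry c1 = L := by
    ext τ
    by_cases hi : i0 ∈ τ
    · constructor
      · intro h
        rw [mem_bdry, hcof1 τ hi] at h
        exact absurd h (hodd τ)
      · intro h
        exact absurd hi (((hLmem τ).mp h).1)
    · have hcofc1 : cof c1 τ = c1.filter (fun σ => σ = insert i0 τ) := by
        ext σ
        simp only [cof, mem_filter]
        constructor
        · rintro ⟨hσ, hsub, hcard⟩
          refine ⟨hσ, ?_⟩
          have hins : insert i0 τ ⊆ σ :=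
            Finset.insert_subset ((hc1mem σ).mp hσ).2 hsub
          have hcard2 : (insert i0 τ).card = τ.card + 1 :=
            Finset.card_insert_of_notMem hi
          exact (Finset.eq_of_subset_of_card_le hins (by omega)).symm
        · rintro ⟨hσ, rfl⟩
          exact ⟨hσ, Finset.subset_insert i0 τ,
            (Finset.card_insert_of_notMem hi).symm⟩
      have hcnt : (cof c1 τ).card = if insert i0 τ ∈ c1 then 1 else 0 := by
        rw [hcofc1, Finset.filter_eq']
        split <;> simp
      rw [mem_bdry, hcnt, hLmem τ]
      constructor
      · intro h
        refine ⟨hi, ?_⟩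
        by_contra hmem
        rw [if_neg hmem] at h
        exact (by decide : ¬ Odd 0) h
      · rintro ⟨_, hmem⟩
        rw [if_pos hmem]
        decide
  -- bdry c2 = L
  have hbc2 : bdry c2 = L := by
    have h := bdry_symmDiff c1 c2
    rw [hc12, hcyc] at h
    have h2 : symmDiff (bdry c1) (bdry c2) = ⊥ := h.symm
    have h3 := symmDiff_eq_bot.mp h2
    rw [← h3, hbc1]
  -- bdry L = ∅
  have hbL : bdry L = ∅ := by
    rw [Finset.eq_empty_iff_forall_notMem]
    intro τ hτ
    rw [mem_bdry] at hτ
    by_cases hi : i0 ∈ τ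
    · have hLe : cof L τ = ∅ := by
        rw [Finset.eq_empty_iff_forall_notMem]
        intro α hα
        rw [cof, mem_filter] at hα
        exact (((hLmem α).mp hα.1).1) (hα.2.1 hi)
      rw [hLe] at hτ
      exact (by decide : ¬ Odd (0:ℕ)) (by simpa using hτ)
    · have hcofL : (cof L τ).card = (cof c (insert i0 τ)).card := by
        have h1 : cof L τ = (c1.filter (fun σ => insert i0 τ ⊆ σ ∧
            (insert i0 τ).card + 1 = σ.card)).image (fun σ => σ.erase i0) := by
          rw [cof, hLdef, Finset.filter_image]
          congr 1
          apply Finset.filter_congr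
          intro σ hσ
          have hiσ : i0 ∈ σ := ((hc1mem σ).mp hσ).2
          have hce : (σ.erase i0).card + 1 = σ.card := Finset.card_erase_add_one hiσ
          have hci : (insert i0 τ).card = τ.card + 1 := Finset.card_insert_of_notMem hi
          simp only [Finset.subset_erase, Finset.insert_subset_iff]
          constructor
          · rintro ⟨⟨ha, _⟩, hb⟩
            exact ⟨⟨hiσ, ha⟩, by omega⟩
          · rintro ⟨⟨_, ha⟩, hb⟩
            exact ⟨⟨ha, hi⟩, by omega⟩
        have h2 : (cof L τ).card = (c1.filter (fun σ => insert i0 τ ⊆ σ ∧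
            (insert i0 τ).card + 1 = σ.card)).card := by
          rw [h1]
          apply Finset.card_image_of_injOn
          intro σ1 hσ1 σ2 hσ2 heq
          dsimp only at heq
          have hi1 : i0 ∈ σ1 := ((hc1mem σ1).mp (Finset.mem_of_mem_filter σ1 hσ1)).2
          have hi2 : i0 ∈ σ2 := ((hc1mem σ2).mp (Finset.mem_of_mem_filter σ2 hσ2)).2
          rw [← Finset.insert_erase hi1, heq, Finset.insert_erase hi2]
        rw [h2, ← cof, hcof1 _ (Finset.mem_insert_self i0 τ)]
      rw [hcofL] at hτ
      exact hodd _ hτ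
  -- the subfamily of sets meeting F i0
  set P : Fin (m + 1) → Prop := fun i => i ≠ i0 ∧ (F i ⊓ F i0).Nonempty with hPdef
  set e' : Fin (Fintype.card {i // P i}) ≃ {i // P i} :=
    (Fintype.equivFin {i // P i}).symm with he'
  set g : Fin (Fintype.card {i // P i}) → Fin (m + 1) := fun a => (e' a).1 with hgdef
  have hg : Function.Injective g :=
    fun a b h => e'.injective (Subtype.ext h)
  have hgP : ∀ a, P (g a) := fun a => (e' a).2
  have hPg : ∀ i, P i → ∃ a, g a = i := by
    intro i h
    refine ⟨e'.symm ⟨i, h⟩, ?_⟩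
    simp [hgdef]
  set F' : Fin (Fintype.card {i // P i}) → Finset V := fun a => F (g a) ⊓ F i0 with hF'def
  have hinfF' : ∀ σ' : Finset (Fin (Fintype.card {i // P i})), σ'.Nonempty →
      σ'.inf F' = (insert i0 (σ'.image g)).inf F := by
    intro σ' hσ'
    rw [Finset.inf_insert, hF'def]
    rw [inf_inf_const hσ' (fun a => F (g a)) (F i0)]
    rw [Finset.inf_image]
    exact inf_comm _ _
  have hF'cover : IsConnCover G F' := by
    constructor
    · intro a; exact (hgP a).2
    · intro σ' hσ'ne hσ'inf
      rw [hinfF' σ' hσ'ne] at hσ'inf ⊢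
      exact hF.2 _ (Finset.insert_nonempty i0 _) hσ'inf
  have hsuppL : ∀ τ ∈ L, ∀ i ∈ τ, ∃ a, g a = i := by
    intro τ hτ i hiτ
    obtain ⟨hτi0, hins⟩ := (hLmem τ).mp hτ
    have hσc : insert i0 τ ∈ c := ((hc1mem _).mp hins).1
    have hinf : ((insert i0 τ).inf F).Nonempty := (mem_nerveF.mp (hcK _ hσc)).2
    apply hPg
    constructor
    · rintro rfl; exact hτi0 hiτ
    · refine hinf.mono (le_inf ?_ ?_)
      · exact Finset.inf_le (Finset.mem_insert_of_mem hiτ)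
      · exact Finset.inf_le (Finset.mem_insert_self i0 τ)
  have hLprops : ∀ τ ∈ L, i0 ∉ τ ∧ τ.card = k + 1 ∧ ((insert i0 τ).inf F).Nonempty := by
    intro τ hτ
    obtain ⟨hτi0, hins⟩ := (hLmem τ).mp hτ
    have hσc : insert i0 τ ∈ c := ((hc1mem _).mp hins).1
    have hcard : (insert i0 τ).card = k + 2 := hccard _ hσc
    have hcard2 : (insert i0 τ).card = τ.card + 1 := Finset.card_insert_of_notMem hτi0
    exact ⟨hτi0, by omega, (mem_nerveF.mp (hcK _ hσc)).2⟩
  by_cases hra : RedHomNonzero (nerveF F') k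
  · exact ⟨_, F', hF'cover, hra⟩
  -- otherwise L is a boundary in the nerve of F'
  rw [RedHomNonzero] at hra
  push_neg at hra
  set L' := L.image (pback g) with hL'def
  have hpushL : pushC g L' = L := pushC_pback hsuppL
  have hL'chain : IsChainOf (nerveF F') k L' := by
    intro τ' hτ'
    rw [hL'def, mem_image] at hτ'
    obtain ⟨τ, hτL, rfl⟩ := hτ'
    obtain ⟨hτi0, hτcard, hτinf⟩ := hLprops τ hτL
    have hτg : (pback g τ).image g = τ := image_pback (hsuppL τ hτL)
    have hcard : (pback g τ).card = τ.card := card_pback hg (hsuppL τ hτL)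
    have hne : (pback g τ).Nonempty :=
      pback_nonempty (hsuppL τ hτL) (by rw [← Finset.card_pos, hτcard]; omega)
    constructor
    · rw [mem_nerveF]
      refine ⟨hne, ?_⟩
      rw [hinfF' _ hne, hτg]
      exact hτinf
    · rw [hcard, hτcard]
  have hL'cyc : bdry L' = ∅ := by
    have h := bdry_push hg L'
    rw [hpushL, hbL] at h
    rw [pushC] at h
    exact Finset.image_eq_empty.mp h.symm
  obtain ⟨b', hb'chain, hb'⟩ := hra L' hL'chain hL'cyc
  set b := pushC g b' with hbdef
  have hbprops : ∀ β ∈ b, i0 ∉ β ∧ β.card = k + 2 ∧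
      ((insert i0 β).inf F).Nonempty ∧ β ∈ nerveF F := by
    intro β hβ
    rw [hbdef, pushC, mem_image] at hβ
    obtain ⟨β', hβ', rfl⟩ := hβ
    obtain ⟨hβ'K, hβ'card⟩ := hb'chain β' hβ'
    have hβ'ne : β'.Nonempty := by rw [← Finset.card_pos, hβ'card]; omega
    have hni0 : i0 ∉ β'.image g := by
      rw [mem_image]
      rintro ⟨a, _, ha⟩
      exact (hgP a).1 ha
    have hcard : (β'.image g).card = k + 2 := by
      rw [Finset.card_image_of_injective _ hg, hβ'card]
    have hinfβ' : (β'.inf F').Nonempty := (mem_nerveF.mp hβ'K).2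
    have hinfeq : β'.inf F' = (insert i0 (β'.image g)).inf F := hinfF' β' hβ'ne
    have hinfins : ((insert i0 (β'.image g)).inf F).Nonempty := hinfeq ▸ hinfβ'
    refine ⟨hni0, hcard, hinfins, ?_⟩
    rw [mem_nerveF]
    refine ⟨hβ'ne.image g, ?_⟩
    refine Finset.Nonempty.mono ?_ hinfins
    rw [Finset.inf_insert]
    exact Finset.le_iff_subset.mp inf_le_right
  have hbdryb : bdry b = L := by
    rw [hbdef, bdry_push hg, hb', hpushL]
  set bh := b.image (fun β => insert i0 β) with hbhdef
  have hbhchain : IsChainOf (nerveF F) (k + 2) bh := by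
    intro σ hσ
    rw [hbhdef, mem_image] at hσ
    obtain ⟨β, hβ, rfl⟩ := hσ
    obtain ⟨hβi0, hβcard, hβinf, _⟩ := hbprops β hβ
    refine ⟨mem_nerveF.mpr ⟨Finset.insert_nonempty _ _, hβinf⟩, ?_⟩
    rw [Finset.card_insert_of_notMem hβi0, hβcard]
  have hcofbh : ∀ τ : Finset (Fin (m + 1)), (cof bh τ).card =
      (b.filter (fun β => τ ⊆ insert i0 β ∧ τ.card + 1 = (insert i0 β).card)).card := by
    intro τ
    rw [cof, hbhdef, Finset.filter_image]
    apply Finset.card_image_of_injOn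
    intro β1 hβ1 β2 hβ2 heq
    dsimp only at heq
    have h1 : i0 ∉ β1 := (hbprops β1 (Finset.mem_of_mem_filter β1 hβ1)).1
    have h2 : i0 ∉ β2 := (hbprops β2 (Finset.mem_of_mem_filter β2 hβ2)).1
    rw [← Finset.erase_insert h1, heq, Finset.erase_insert h2]
  have hbh : bdry bh = b ∪ c1 := by
    ext τ
    rw [mem_bdry, Finset.mem_union, hcofbh τ]
    by_cases hi : i0 ∈ τ
    · have heq : (b.filter (fun β => τ ⊆ insert i0 β ∧ τ.card + 1 = (insert i0 β).card))
          = cof b (τ.erase i0) := by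
        rw [cof]
        apply Finset.filter_congr
        intro β hβ
        have hβi0 : i0 ∉ β := (hbprops β hβ).1
        have hcb : (insert i0 β).card = β.card + 1 := Finset.card_insert_of_notMem hβi0
        have hcτ : (τ.erase i0).card + 1 = τ.card := Finset.card_erase_add_one hi
        constructor
        · rintro ⟨hsub, hcard⟩
          refine ⟨?_, by omega⟩
          intro x hx
          have hxτ : x ∈ τ := Finset.mem_of_mem_erase hx
          rcases Finset.mem_insert.mp (hsub hxτ) with h | h
          · exact absurd h (Finset.ne_of_mem_erase hx)
          · exact h
        · rintro ⟨hsub, hcard⟩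
          constructor
          · intro x hx
            by_cases hxi : x = i0
            · subst hxi; exact Finset.mem_insert_self _ _
            · exact Finset.mem_insert_of_mem (hsub (Finset.mem_erase.mpr ⟨hxi, hx⟩))
          · omega
      have hLiff : Odd (cof b (τ.erase i0)).card ↔ τ.erase i0 ∈ L := by
        rw [← mem_bdry, hbdryb]
      rw [heq, hLiff, hLmem, Finset.insert_erase hi]
      simp only [Finset.notMem_erase, not_false_iff, true_and]
      constructor
      · exact fun h => Or.inr h
      · rintro (h | h)
        · exact absurd hi (fun _ => (hbprops τ h).1 hi)
        · exact h
    · have heq : (b.filter (fun β => τ ⊆ insert i0 β ∧ τ.card + 1 = (insert i0 β).card))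
          = b.filter (fun β => β = τ) := by
        apply Finset.filter_congr
        intro β hβ
        have hβi0 : i0 ∉ β := (hbprops β hβ).1
        have hcb : (insert i0 β).card = β.card + 1 := Finset.card_insert_of_notMem hβi0
        constructor
        · rintro ⟨hsub, hcard⟩
          have hsub' : τ ⊆ β := by
            intro x hx
            rcases Finset.mem_insert.mp (hsub hx) with h | h
            · exact absurd (h ▸ hx) hi
            · exact h
          exact (Finset.eq_of_subset_of_card_le hsub' (by omega)).symm
        · rintro rfl
          exact ⟨Finset.subset_insert _ _, by omega⟩
      rw [heq, Finset.filter_eq']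
      by_cases hb : τ ∈ b
      · rw [if_pos hb]
        simp only [Finset.card_singleton]
        exact ⟨fun _ => Or.inl hb, fun _ => by decide⟩
      · rw [if_neg hb]
        simp only [Finset.card_empty]
        constructor
        · intro h; exact absurd h (by decide)
        · rintro (h | h)
          · exact absurd h hb
          · exact absurd (((hc1mem τ).mp h).2) hi
  have hdisj : Disjoint b c1 := by
    rw [Finset.disjoint_left]
    intro τ hb hc1'
    exact (hbprops τ hb).1 ((hc1mem τ).mp hc1').2
  have hbhsym : bdry bh = symmDiff b c1 := by
    rw [hbh, hdisj.symmDiff_eq_sup, Finset.sup_eq_union]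
  set cc := symmDiff c2 b with hccdef
  have hccbdry : bdry cc = ∅ := by
    rw [hccdef, bdry_symmDiff, hbc2, hbdryb, symmDiff_self]
    rfl
  have hccmem : ∀ σ ∈ cc, i0 ∉ σ ∧ σ.card = k + 2 ∧ σ ∈ nerveF F := by
    intro σ hσ
    rw [hccdef, Finset.mem_symmDiff] at hσ
    rcases hσ with ⟨h1, _⟩ | ⟨h1, _⟩
    · have h := (hc2mem σ).mp h1
      exact ⟨h.2, hccard σ h.1, hcK σ h.1⟩
    · obtain ⟨a1, a2, _, a4⟩ := hbprops σ h1
      exact ⟨a1, a2, a4⟩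
  set g2 : Fin m → Fin (m + 1) := i0.succAbove with hg2def
  have hg2 : Function.Injective g2 := Fin.succAbove_right_injective
  have hsupp2 : ∀ σ ∈ cc, ∀ x ∈ σ, ∃ a, g2 a = x := by
    intro σ hσ x hx
    have hxne : x ≠ i0 := fun h => (hccmem σ hσ).1 (h ▸ hx)
    exact Fin.exists_succAbove_eq hxne
  set F2 : Fin m → Finset V := F ∘ g2 with hF2def
  have hF2cover : IsConnCover G F2 := by
    constructor
    · intro a; exact hF.1 _
    · intro σ hσne hσinf
      have heq : σ.inf F2 = (σ.image g2).inf F := (Finset.inf_image σ g2 F).symm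
      rw [heq] at hσinf ⊢
      exact hF.2 _ (hσne.image g2) hσinf
  set c3 := cc.image (pback g2) with hc3def
  have hpush3 : pushC g2 c3 = cc := pushC_pback hsupp2
  have hc3chain : IsChainOf (nerveF F2) (k + 1) c3 := by
    intro τ hτ
    rw [hc3def, mem_image] at hτ
    obtain ⟨σ, hσ, rfl⟩ := hτ
    obtain ⟨hσi0, hσcard, hσK⟩ := hccmem σ hσ
    have hτg : (pback g2 σ).image g2 = σ := image_pback (hsupp2 σ hσ)
    have hcard : (pback g2 σ).card = σ.card := card_pback hg2 (hsupp2 σ hσ)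
    have hne : (pback g2 σ).Nonempty :=
      pback_nonempty (hsupp2 σ hσ) (by rw [← Finset.card_pos, hσcard]; omega)
    refine ⟨mem_nerveF.mpr ⟨hne, ?_⟩, by rw [hcard, hσcard]⟩
    have hinfeq : (pback g2 σ).inf F2 = σ.inf F := by
      conv_rhs => rw [← hτg]
      rw [Finset.inf_image, hF2def]
    rw [hinfeq]
    exact (mem_nerveF.mp hσK).2
  have hc3cyc : bdry c3 = ∅ := by
    have h := bdry_push hg2 c3
    rw [hpush3, hccbdry] at h
    rw [pushC] at h
    exact Finset.image_eq_empty.mp h.symm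
  have hc3nb : ∀ e3, IsChainOf (nerveF F2) (k + 2) e3 → bdry e3 ≠ c3 := by
    intro e3 he3 heq3
    set e := pushC g2 e3 with hedef
    have hechain : IsChainOf (nerveF F) (k + 2) e := by
      intro σ hσ
      rw [hedef, pushC, mem_image] at hσ
      obtain ⟨τ, hτ, rfl⟩ := hσ
      obtain ⟨hτK, hτcard⟩ := he3 τ hτ
      have hτne : τ.Nonempty := (mem_nerveF.mp hτK).1
      refine ⟨mem_nerveF.mpr ⟨hτne.image g2, ?_⟩,
        by rw [Finset.card_image_of_injective _ hg2, hτcard]⟩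
      have hinfeq : (τ.image g2).inf F = τ.inf F2 := by
        rw [hF2def, Finset.inf_image]
      rw [hinfeq]
      exact (mem_nerveF.mp hτK).2
    have hbe : bdry e = cc := by
      rw [hedef, bdry_push hg2, heq3, hpush3]
    have hfinal : bdry (symmDiff e bh) = c := by
      rw [bdry_symmDiff, hbe, hbhsym, hccdef]
      rw [symmDiff_assoc, ← symmDiff_assoc b b c1, symmDiff_self, bot_symmDiff,
        symmDiff_comm c2 c1, hc12]
    have hchain : IsChainOf (nerveF F) (k + 2) (symmDiff e bh) := by
      intro σ hσ
      rw [Finset.mem_symmDiff] at hσ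
      rcases hσ with ⟨h1, _⟩ | ⟨h1, _⟩
      · exact hechain σ h1
      · exact hbhchain σ h1
    exact hnb _ hchain hfinal
  exact IH m (Nat.lt_succ_self m) F2 hF2cover c3 hc3chain hc3cyc hc3nb

lemma gamma_step {V : Type} [Fintype V] [DecidableEq V] (G : SimpleGraph V) (k : ℕ)
    (h : GammaGe G (k + 1)) : GammaGe G k := by
  obtain ⟨n, F, hF, c, hc, hcyc, hnb⟩ := h
  exact key_step G k n F hF c hc hcyc hnb

/-- for a graph `G` with `γ(G) ≥ 0`, for every `0 ≤ j ≤ γ(G)` there is a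
connected cover in `G` whose nerve has nonzero reduced Z/2-homology in dimension `j`
(i.e. `GammaGe` is downward closed). -/
theorem stmt4 {V : Type} [Fintype V] [DecidableEq V] (G : SimpleGraph V)
    (d j : ℕ) (hd : GammaGe G d) (hj : j ≤ d) : GammaGe G j := by
  obtain ⟨i, rfl⟩ : ∃ i, d = j + i := ⟨d - j, by omega⟩
  clear hj
  revert hd
  induction i with
  | zero => exact id
  | succ i ih => exact fun hd => ih (gamma_step G (j + i) hd)
end

section
/- Let F be a connected cover in a graph G with H̃_j(N(F); Z/2) ≠ 0 for some j ≥ 0, and suppose F is minimal in the sense that H̃_j(N(F'); Z/2) = 0 for every proper subfamily F' ⊊ F. Then for every member G_x ∈ F, the homological dimension of the graph G_x satisfies γ(G_x) ≥ j − 1. -/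
open Finset

/-!
Fix a member `x`. A nonzero `j`-cycle `c` of the nerve splits at `x`: the faces through `x`
form the cone `x * d` over a `(j-1)`-cycle `d` of the link of `x`, and `d` is the boundary of
the part of `c` avoiding `x`. If `d = ∂b` in the link, then `c + ∂(x * b)` is a `j`-cycle
avoiding `x`; by minimality it bounds in the subfamily without `x`, and then `c` would bound.
So `H̃_{j-1}` of the link is nonzero, and the link of `x` in the nerve is the nerve of the cover
of `G_x` by its intersections with the other members, which is again a connected cover.
-/

open scoped symmDiff

section Chains

variable {ι : Type} [DecidableEq ι]

lemma mem_bdry {c : Finset (Finset ι)} {τ : Finset ι} :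
    τ ∈ bdry c ↔ Odd (c.filter fun σ => τ ⊆ σ ∧ τ.card + 1 = σ.card).card := by
  simp only [bdry, mem_filter, mem_sup, mem_powerset, and_iff_right_iff_imp]
  intro h
  obtain ⟨σ, hσ⟩ := card_pos.1 h.pos
  exact ⟨σ, (mem_filter.1 hσ).1, (mem_filter.1 hσ).2.1⟩

lemma exists_superset_of_mem_bdry {c : Finset (Finset ι)} {τ : Finset ι} (h : τ ∈ bdry c) :
    ∃ σ ∈ c, τ ⊆ σ :=
  have ⟨σ, hσ⟩ := card_pos.1 (mem_bdry.1 h).pos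
  ⟨σ, (mem_filter.1 hσ).1, (mem_filter.1 hσ).2.1⟩

lemma card_filter_symmDiff_add (p : ι → Prop) [DecidablePred p] (a b : Finset ι) :
    ((a ∆ b).filter p).card + 2 * ((a ∩ b).filter p).card
      = (a.filter p).card + (b.filter p).card := by
  have hsplit : ∀ s t : Finset ι,
      (s.filter p).card = ((s \ t).filter p).card + ((s ∩ t).filter p).card := fun s t => by
    rw [← card_union_of_disjoint (disjoint_filter_filter (disjoint_sdiff_inter s t)),
        ← filter_union, sdiff_union_inter]
  rw [Finset.symmDiff_def, filter_union,
    card_union_of_disjoint (disjoint_filter_filter disjoint_sdiff_sdiff), hsplit a b, hsplit b a,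
    inter_comm b a]
  ring

lemma bdry_symmDiff (a b : Finset (Finset ι)) : bdry (a ∆ b) = bdry a ∆ bdry b := by
  ext τ
  have := card_filter_symmDiff_add (fun σ => τ ⊆ σ ∧ τ.card + 1 = σ.card) a b
  simp only [Finset.mem_symmDiff, mem_bdry, Nat.odd_iff] at *
  omega

lemma IsChainOf.symmDiff {K : Finset (Finset ι)} {d : ℕ} {a b : Finset (Finset ι)}
    (ha : IsChainOf K d a) (hb : IsChainOf K d b) : IsChainOf K d (a ∆ b) := fun σ hσ =>
  (Finset.mem_symmDiff.1 hσ).elim (fun h => ha σ h.1) (fun h => hb σ h.1)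

lemma IsChainOf.mono {K L : Finset (Finset ι)} {d : ℕ} {c : Finset (Finset ι)}
    (hc : IsChainOf K d c) (hKL : K ⊆ L) : IsChainOf L d c := fun σ hσ =>
  ⟨hKL (hc σ hσ).1, (hc σ hσ).2⟩

lemma exists_bdry_eq_of_not_redHomNonzero {K : Finset (Finset ι)} {d : ℕ}
    (hK : ¬ RedHomNonzero K d) {c : Finset (Finset ι)} (hc : IsChainOf K d c)
    (hcyc : bdry c = ∅) : ∃ b, IsChainOf K (d + 1) b ∧ bdry b = c := by
  by_contra! h
  exact hK ⟨c, hc, hcyc, h⟩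

end Chains

section ChainMap

variable {ι κ : Type} [DecidableEq ι]

def chainMap (e : κ → ι) (c : Finset (Finset κ)) : Finset (Finset ι) :=
  c.image (Finset.image e)

variable {e : κ → ι}

lemma chainMap_injective (he : Function.Injective e) : Function.Injective (chainMap e) :=
  image_injective (image_injective he)

variable [DecidableEq κ]

lemma card_filter_chainMap (he : Function.Injective e) (c : Finset (Finset κ))
    (τ : Finset κ) :
    ((chainMap e c).filter fun ρ => τ.image e ⊆ ρ ∧ (τ.image e).card + 1 = ρ.card).card
      = (c.filter fun σ => τ ⊆ σ ∧ τ.card + 1 = σ.card).card := by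
  rw [chainMap, filter_image, card_image_of_injective _ (image_injective he)]
  simp only [image_subset_image_iff he, card_image_of_injective _ he]

lemma bdry_chainMap (he : Function.Injective e) (c : Finset (Finset κ)) :
    bdry (chainMap e c) = chainMap e (bdry c) := by
  ext ρ
  constructor
  · intro h
    obtain ⟨_, hσ, hρσ⟩ := exists_superset_of_mem_bdry h
    obtain ⟨σ, -, rfl⟩ := mem_image.1 hσ
    obtain ⟨τ, -, rfl⟩ := subset_image_iff.1 hρσ
    rw [mem_bdry, card_filter_chainMap he] at h
    exact mem_image_of_mem _ (mem_bdry.2 h)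
  · intro h
    obtain ⟨τ, hτ, rfl⟩ := mem_image.1 h
    rwa [mem_bdry, card_filter_chainMap he, ← mem_bdry]

lemma IsChainOf.map (he : Function.Injective e) {K : Finset (Finset κ)} {d : ℕ}
    {c : Finset (Finset κ)} (hc : IsChainOf K d c) :
    IsChainOf (K.image (image e)) d (chainMap e c) := by
  intro ρ hρ
  obtain ⟨σ, hσ, rfl⟩ := mem_image.1 hρ
  exact ⟨mem_image_of_mem _ (hc σ hσ).1, by rw [card_image_of_injective _ he, (hc σ hσ).2]⟩

lemma IsChainOf.exists_chainMap_eq (he : Function.Injective e) {K : Finset (Finset κ)} {d : ℕ}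
    {c : Finset (Finset ι)} (hc : IsChainOf (K.image (image e)) d c) :
    ∃ c', IsChainOf K d c' ∧ chainMap e c' = c := by
  refine ⟨K.filter fun σ => σ.image e ∈ c, fun σ hσ => ⟨(mem_filter.1 hσ).1, ?_⟩, ?_⟩
  · rw [← (hc _ (mem_filter.1 hσ).2).2, card_image_of_injective _ he]
  · ext ρ
    simp only [chainMap, mem_image, mem_filter]
    constructor
    · rintro ⟨σ, ⟨-, hσ⟩, rfl⟩
      exact hσ
    · intro hρ
      obtain ⟨σ, hσ, rfl⟩ := mem_image.1 (hc ρ hρ).1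
      exact ⟨σ, ⟨hσ, hρ⟩, rfl⟩

theorem redHomNonzero_image_iff (he : Function.Injective e) {K : Finset (Finset κ)} {d : ℕ} :
    RedHomNonzero (K.image (image e)) d ↔ RedHomNonzero K d := by
  have hcyc : ∀ c, bdry (chainMap e c) = ∅ ↔ bdry c = ∅ := fun c => by
    rw [bdry_chainMap he, ← (chainMap_injective he).eq_iff]
    simp [chainMap]
  constructor
  · rintro ⟨c, hc, hbc, hnb⟩
    obtain ⟨c', hc', rfl⟩ := hc.exists_chainMap_eq he
    refine ⟨c', hc', (hcyc c').1 hbc, fun b hb hbd => hnb _ (hb.map he) ?_⟩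
    rw [bdry_chainMap he, hbd]
  · rintro ⟨c, hc, hbc, hnb⟩
    refine ⟨chainMap e c, hc.map he, (hcyc c).2 hbc, fun b hb hbd => ?_⟩
    obtain ⟨b', hb', rfl⟩ := hb.exists_chainMap_eq he
    rw [bdry_chainMap he] at hbd
    exact hnb b' hb' (chainMap_injective he hbd)

end ChainMap

section Link

variable {ι : Type} [DecidableEq ι]

def link (K : Finset (Finset ι)) (x : ι) : Finset (Finset ι) :=
  K.filter fun τ => x ∉ τ ∧ insert x τ ∈ K

def chainLink (c : Finset (Finset ι)) (x : ι) : Finset (Finset ι) :=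
  (c.filter (x ∈ ·)).image fun σ => σ.erase x

lemma notMem_of_mem_chainLink {c : Finset (Finset ι)} {x : ι} {τ : Finset ι}
    (hτ : τ ∈ chainLink c x) : x ∉ τ := by
  obtain ⟨σ, -, rfl⟩ := mem_image.1 hτ
  exact notMem_erase x σ

lemma image_insert_chainLink (c : Finset (Finset ι)) (x : ι) :
    (chainLink c x).image (insert x) = c.filter (x ∈ ·) := by
  rw [chainLink, image_image]
  exact (image_congr fun σ hσ => insert_erase (mem_filter.1 hσ).2).trans image_id

lemma bdry_cone {x : ι} {b : Finset (Finset ι)} (hx : ∀ τ ∈ b, x ∉ τ) :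
    bdry (b.image (insert x)) = b ∪ (bdry b).image (insert x) := by
  have hinj : Set.InjOn (insert x) (b : Set (Finset ι)) := fun s hs t ht hst => by
    rw [← erase_insert (hx s hs), ← erase_insert (hx t ht), hst]
  ext ρ
  rw [mem_bdry, filter_image, card_image_of_injOn (hinj.mono (coe_subset.2 (filter_subset _ _))),
    mem_union]
  by_cases hxρ : x ∈ ρ
  · have hρb : ρ ∉ b := fun h => hx ρ h hxρ
    have himg : ρ ∈ (bdry b).image (insert x) ↔ ρ.erase x ∈ bdry b := by
      constructor
      · intro h
        obtain ⟨τ, hτ, rfl⟩ := mem_image.1 h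
        obtain ⟨σ, hσ, hτσ⟩ := exists_superset_of_mem_bdry hτ
        rwa [erase_insert fun h => hx σ hσ (hτσ h)]
      · exact fun h => mem_image.2 ⟨ρ.erase x, h, insert_erase hxρ⟩
    have hcard : ρ.card = (ρ.erase x).card + 1 := (card_erase_add_one hxρ).symm
    rw [himg, mem_bdry, filter_congr fun τ hτ => by
      rw [card_insert_of_notMem (hx τ hτ), subset_insert_iff, hcard, add_left_inj]]
    simp [hρb]
  · have hρimg : ρ ∉ (bdry b).image (insert x) := fun h => by
      obtain ⟨τ, -, rfl⟩ := mem_image.1 h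
      exact hxρ (mem_insert_self x τ)
    have hcongr : (b.filter fun τ => ρ ⊆ insert x τ ∧ ρ.card + 1 = (insert x τ).card)
        = b.filter (· = ρ) := filter_congr fun τ hτ => by
      rw [card_insert_of_notMem (hx τ hτ), subset_insert_iff_of_notMem hxρ, add_left_inj]
      exact ⟨fun h => (eq_of_subset_of_card_le h.1 h.2.ge).symm, fun h => ⟨h.ge, h ▸ rfl⟩⟩
    rw [hcongr, filter_eq']
    by_cases hρb : ρ ∈ b <;> simp [hρb, hρimg]

lemma bdry_chainLink_of_bdry_eq_empty {c : Finset (Finset ι)} (hc : bdry c = ∅) (x : ι) :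
    bdry (chainLink c x) = ∅ ∧ bdry (c.filter (x ∉ ·)) = chainLink c x := by
  have hsplit : c.filter (x ∈ ·) ∆ c.filter (x ∉ ·) = c := by
    rw [symmDiff_eq_union (disjoint_filter_filter_not c c _), filter_union_filter_not_eq]
  have hcone := bdry_cone (x := x) (b := chainLink c x) fun _ => notMem_of_mem_chainLink
  rw [image_insert_chainLink] at hcone
  have heq : bdry (c.filter (x ∈ ·)) = bdry (c.filter (x ∉ ·)) := by
    rw [← symmDiff_eq_empty, ← bdry_symmDiff, hsplit, hc]
  have havoid : ∀ ρ ∈ bdry (c.filter (x ∉ ·)), x ∉ ρ := fun ρ hρ hxρ => by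
    obtain ⟨σ, hσ, hρσ⟩ := exists_superset_of_mem_bdry hρ
    exact (mem_filter.1 hσ).2 (hρσ hxρ)
  have hempty : (bdry (chainLink c x)).image (insert x) = ∅ :=
    eq_empty_iff_forall_notMem.2 fun ρ hρ => by
      obtain ⟨τ, -, rfl⟩ := mem_image.1 hρ
      exact havoid _ (heq ▸ hcone ▸ mem_union_right _ hρ) (mem_insert_self x τ)
  refine ⟨image_eq_empty.1 hempty, ?_⟩
  rw [← heq, hcone, hempty, union_empty]

lemma IsChainOf.chainLink {K : Finset (Finset ι)}
    (hK : ∀ σ ∈ K, ∀ τ : Finset ι, τ.Nonempty → τ ⊆ σ → τ ∈ K) {d : ℕ}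
    {c : Finset (Finset ι)} (hc : IsChainOf K (d + 1) c) (x : ι) :
    IsChainOf (link K x) d (chainLink c x) := by
  intro τ hτ
  obtain ⟨σ, hσ, rfl⟩ := mem_image.1 hτ
  obtain ⟨hσc, hxσ⟩ := mem_filter.1 hσ
  have hcard : (σ.erase x).card = d + 1 := by rw [card_erase_of_mem hxσ, (hc σ hσc).2]; rfl
  refine ⟨mem_filter.2 ⟨hK σ (hc σ hσc).1 _ ?_ (erase_subset x σ), notMem_erase x σ, ?_⟩, hcard⟩
  · rw [← card_pos, hcard]; omega
  · rw [insert_erase hxσ]; exact (hc σ hσc).1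

theorem redHomNonzero_link {K : Finset (Finset ι)}
    (hK : ∀ σ ∈ K, ∀ τ : Finset ι, τ.Nonempty → τ ⊆ σ → τ ∈ K) {x : ι} {d : ℕ}
    (hH : RedHomNonzero K (d + 1)) (hdel : ¬ RedHomNonzero (K.filter (x ∉ ·)) (d + 1)) :
    RedHomNonzero (link K x) d := by
  obtain ⟨c, hc, hcyc, hnb⟩ := hH
  obtain ⟨hlink_cyc, hbdry_avoid⟩ := bdry_chainLink_of_bdry_eq_empty hcyc x
  refine ⟨chainLink c x, hc.chainLink hK x, hlink_cyc, fun b hb hbd => ?_⟩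
  have hbx : ∀ τ ∈ b, x ∉ τ ∧ insert x τ ∈ K := fun τ hτ => (mem_filter.1 (hb τ hτ).1).2
  have hcone : IsChainOf K (d + 1 + 1) (b.image (insert x)) := fun σ hσ => by
    obtain ⟨τ, hτ, rfl⟩ := mem_image.1 hσ
    exact ⟨(hbx τ hτ).2, by rw [card_insert_of_notMem (hbx τ hτ).1, (hb τ hτ).2]⟩
  have hbdry_cone : bdry (b.image (insert x)) = b ∪ c.filter (x ∈ ·) := by
    rw [bdry_cone fun τ hτ => (hbx τ hτ).1, hbd, image_insert_chainLink]
  have hrest : IsChainOf (K.filter (x ∉ ·)) (d + 1) (c.filter (x ∉ ·) ∆ b) := by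
    refine IsChainOf.symmDiff (fun σ hσ => ?_) (hb.mono fun τ hτ => ?_)
    · obtain ⟨hσc, hxσ⟩ := mem_filter.1 hσ
      exact ⟨mem_filter.2 ⟨(hc σ hσc).1, hxσ⟩, (hc σ hσc).2⟩
    · exact mem_filter.2 ⟨(mem_filter.1 hτ).1, (mem_filter.1 hτ).2.1⟩
  obtain ⟨f, hf, hbf⟩ := exists_bdry_eq_of_not_redHomNonzero hdel hrest
    (by rw [bdry_symmDiff, hbdry_avoid, hbd, symmDiff_self]; rfl)
  refine hnb _ (hcone.symmDiff (hf.mono (filter_subset _ _))) ?_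
  rw [bdry_symmDiff, hbdry_cone, hbf]
  ext σ
  by_cases hσb : σ ∈ b
  · have := (hbx σ hσb).1
    simp [Finset.mem_symmDiff, hσb, this]
  · by_cases hxσ : x ∈ σ <;> simp [Finset.mem_symmDiff, hσb, hxσ]

end Link

section Nerve

variable {V ι κ : Type} [DecidableEq V] [Fintype V] [Fintype ι] [DecidableEq ι]

lemma mem_nerveF {F : ι → Finset V} {σ : Finset ι} :
    σ ∈ nerveF F ↔ σ.Nonempty ∧ (σ.inf F).Nonempty := by
  simp [nerveF]

lemma mem_nerveF_of_subset {F : ι → Finset V} {σ τ : Finset ι} (hσ : σ ∈ nerveF F)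
    (hτ : τ.Nonempty) (hτσ : τ ⊆ σ) : τ ∈ nerveF F :=
  mem_nerveF.2 ⟨hτ, (mem_nerveF.1 hσ).2.mono (inf_mono hτσ)⟩

variable [Fintype κ] [DecidableEq κ]

lemma image_nerveF_comp (F : ι → Finset V) (e : κ → ι) :
    (nerveF fun k => F (e k)).image (image e) = (nerveF F).filter (· ⊆ univ.image e) := by
  ext σ
  simp only [mem_image, mem_filter, mem_nerveF, subset_univ_image_iff]
  constructor
  · rintro ⟨τ, ⟨hτ, hinf⟩, rfl⟩
    exact ⟨⟨hτ.image e, by rwa [inf_image]⟩, τ, rfl⟩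
  · rintro ⟨⟨hσ, hinf⟩, τ, rfl⟩
    exact ⟨τ, ⟨image_nonempty.1 hσ, by rwa [inf_image] at hinf⟩, rfl⟩

lemma IsConnCover.comp {G : SimpleGraph V} {F : ι → Finset V} (hF : IsConnCover G F)
    (e : κ → ι) : IsConnCover G fun k => F (e k) :=
  ⟨fun k => hF.1 (e k), fun σ hσ hinf => by
    rw [show σ.inf (fun k => F (e k)) = (σ.image e).inf F from (inf_image σ e F).symm] at hinf ⊢
    exact hF.2 _ (hσ.image e) hinf⟩

theorem gammaGe_of_isConnCover {G : SimpleGraph V} {F : ι → Finset V} (hF : IsConnCover G F)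
    {d : ℕ} (hH : RedHomNonzero (nerveF F) d) : GammaGe G d := by
  let e := (Fintype.equivFin ι).symm
  refine ⟨_, fun k => F (e k), hF.comp e, ?_⟩
  rwa [← redHomNonzero_image_iff e.injective, image_nerveF_comp,
    image_univ_of_surjective e.surjective, filter_true_of_mem fun σ _ => subset_univ σ]

end Nerve

lemma SimpleGraph.connected_induce_induce_iff {V : Type} (G : SimpleGraph V) {A : Set V}
    {s : Set A} : ((G.induce A).induce s).Connected ↔ (G.induce (Subtype.val '' s)).Connected := by
  let f := (Embedding.induce (G := G) A).comp (Embedding.induce s)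
  have hrange : Set.range f = Subtype.val '' s := by
    ext v
    constructor
    · rintro ⟨⟨a, ha⟩, rfl⟩
      exact ⟨a, ha, rfl⟩
    · rintro ⟨a, ha, rfl⟩
      exact ⟨⟨a, ha⟩, rfl⟩
  have e := f.isoInduceRange
  rw [hrange] at e
  exact e.connected_iff

section LinkCover

variable {V ι : Type} [DecidableEq V] [Fintype V] [DecidableEq ι]

def linkCover (F : ι → Finset V) (x : ι) (i : {i // i ≠ x ∧ (F i ∩ F x).Nonempty}) :
    Finset ((F x : Finset V) : Set V) :=
  univ.filter fun v => v.1 ∈ F i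

variable {F : ι → Finset V} {x : ι}

lemma coe_inf_linkCover (σ : Finset {i // i ≠ x ∧ (F i ∩ F x).Nonempty}) :
    Subtype.val '' ((σ.inf (linkCover F x) : Finset _) : Set ((F x : Finset V) : Set V))
      = ((insert x (σ.image Subtype.val)).inf F : Finset V) := by
  ext v
  simp [mem_inf, linkCover, and_comm]

lemma inf_linkCover_nonempty_iff {σ : Finset {i // i ≠ x ∧ (F i ∩ F x).Nonempty}} :
    (σ.inf (linkCover F x)).Nonempty ↔ ((insert x (σ.image Subtype.val)).inf F).Nonempty := by
  rw [← coe_nonempty, ← coe_nonempty, ← coe_inf_linkCover, Set.image_nonempty]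

variable [Fintype ι]

lemma IsConnCover.linkCover {G : SimpleGraph V} (hF : IsConnCover G F) (x : ι) :
    IsConnCover (G.induce ((F x : Finset V) : Set V)) (linkCover F x) := by
  refine ⟨fun i => ?_, fun σ _ hinf => ?_⟩
  · obtain ⟨v, hv⟩ := i.2.2
    exact ⟨⟨v, (mem_inter.1 hv).2⟩, mem_filter.2 ⟨mem_univ _, (mem_inter.1 hv).1⟩⟩
  · rw [SimpleGraph.connected_induce_induce_iff, coe_inf_linkCover]
    exact hF.2 _ (insert_nonempty _ _) (inf_linkCover_nonempty_iff.1 hinf)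

lemma image_nerveF_linkCover :
    (nerveF (linkCover F x)).image (image Subtype.val) = link (nerveF F) x := by
  ext τ
  simp only [mem_image, link, mem_filter]
  constructor
  · rintro ⟨σ, hσ, rfl⟩
    obtain ⟨hσne, hinf⟩ := mem_nerveF.1 hσ
    have hins : insert x (σ.image Subtype.val) ∈ nerveF F :=
      mem_nerveF.2 ⟨insert_nonempty _ _, inf_linkCover_nonempty_iff.1 hinf⟩
    refine ⟨mem_nerveF_of_subset hins (hσne.image _) (subset_insert _ _), fun hx => ?_, hins⟩
    obtain ⟨i, -, hi⟩ := mem_image.1 hx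
    exact i.2.1 hi
  · rintro ⟨hτne, hxτ, hins⟩
    have hτ : τ ⊆ univ.image (Subtype.val : {i // i ≠ x ∧ (F i ∩ F x).Nonempty} → ι) := by
      intro i hi
      obtain ⟨v, hv⟩ := (mem_nerveF.1 hins).2
      have hv' := mem_inf.1 hv
      refine mem_image.2 ⟨⟨i, ne_of_mem_of_not_mem hi hxτ, v, ?_⟩, mem_univ _, rfl⟩
      exact mem_inter.2 ⟨hv' i (mem_insert_of_mem hi), hv' x (mem_insert_self x τ)⟩
    obtain ⟨σ, rfl⟩ := subset_univ_image_iff.1 hτ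
    exact ⟨σ, mem_nerveF.2 ⟨image_nonempty.1 (mem_nerveF.1 hτne).1,
      inf_linkCover_nonempty_iff.2 (mem_nerveF.1 hins).2⟩, rfl⟩

end LinkCover

/-- if `F` is a connected cover in `G` with `H̃_j(N(F)) ≠ 0`, minimal in the
sense that every proper subfamily has vanishing `H̃_j`, then every member `G_x ∈ F`
satisfies `γ(G_x) ≥ j - 1`. -/
theorem stmt5 {V : Type} [Fintype V] [DecidableEq V] (G : SimpleGraph V)
    (n : ℕ) (F : Fin n → Finset V) (j : ℕ)
    (hcov : IsConnCover G F)
    (hH : RedHomNonzero (nerveF F) j)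
    (hmin : ∀ S : Finset (Fin n), S ≠ Finset.univ →
      ¬ RedHomNonzero (nerveF fun i : ↥S => F i.1) j) :
    ∀ x : Fin n, 1 ≤ j → GammaGe (G.induce ((F x : Finset V) : Set V)) (j - 1) := by
  intro x hj
  obtain ⟨d, rfl⟩ : ∃ d, j = d + 1 := ⟨j - 1, by omega⟩
  have hdel : ¬ RedHomNonzero ((nerveF F).filter (x ∉ ·)) (d + 1) := by
    have h := hmin (univ.erase x) (by simp [erase_eq_self])
    have hfilter : (nerveF F).filter (· ⊆ univ.erase x) = (nerveF F).filter (x ∉ ·) :=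
      filter_congr fun σ _ => by simp [subset_erase]
    rwa [← redHomNonzero_image_iff Subtype.val_injective, image_nerveF_comp, univ_eq_attach,
      attach_image_val, hfilter] at h
  have hlink := redHomNonzero_link (fun _ hσ _ => mem_nerveF_of_subset hσ) hH hdel
  rw [← image_nerveF_linkCover, redHomNonzero_image_iff Subtype.val_injective] at hlink
  exact gammaGe_of_isConnCover (hcov.linkCover x) hlink
end

section
/- Let G be a connected graph that is a clique-sum of A and B along the clique A ∩ B, and let F be a connected cover in G. Then the families F_A = {G_i ∩ A : G_i ∈ F, G_i ∩ A ≠ ∅} and F_B = {G_i ∩ B : G_i ∈ F, G_i ∩ B ≠ ∅} are connected covers in A and B respectively. (Key step: if u, v lie in G_σ ∩ A and are joined by a path in G_σ, then they are joined by a path in G_σ ∩ A, using that A ∩ B is a clique.) -/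
open Finset

theorem key_walk {V : Type} [DecidableEq V] (G : SimpleGraph V)
    (V₁ V₂ : Finset V) (hunion : ∀ x : V, x ∈ V₁ ∨ x ∈ V₂)
    (hclique : G.IsClique ((V₁ ∩ V₂ : Finset V) : Set V))
    (hnoedge : ∀ a ∈ V₁ \ V₂, ∀ b ∈ V₂ \ V₁, ¬ G.Adj a b)
    (S : Finset V) :
    ∀ (a b : ((S : Set V) : Type)) (_ : (G.induce (S : Set V)).Walk a b)
      (hb : b.1 ∈ V₁),
      (∀ (ha : a.1 ∈ V₁), (G.induce ((S ∩ V₁ : Finset V) : Set V)).Reachable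
          ⟨a.1, by rw [Finset.coe_inter]; exact ⟨a.2, Finset.mem_coe.2 ha⟩⟩
          ⟨b.1, by rw [Finset.coe_inter]; exact ⟨b.2, Finset.mem_coe.2 hb⟩⟩) ∧
      (a.1 ∈ V₂ → ∃ x, ∃ (hx1 : x ∈ V₁) (_ : x ∈ V₂) (hxS : x ∈ (S : Set V)),
          (G.induce ((S ∩ V₁ : Finset V) : Set V)).Reachable
            ⟨x, by rw [Finset.coe_inter]; exact ⟨hxS, Finset.mem_coe.2 hx1⟩⟩
            ⟨b.1, by rw [Finset.coe_inter]; exact ⟨b.2, Finset.mem_coe.2 hb⟩⟩) := by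
  intro a b p
  induction p with
  | nil =>
    intro hb
    exact ⟨fun _ => SimpleGraph.Reachable.refl _,
      fun ha2 => ⟨_, hb, ha2, Subtype.coe_prop _, SimpleGraph.Reachable.refl _⟩⟩
  | @cons a c b h p ih =>
    intro hb
    have hGadj : G.Adj a.1 c.1 := h
    have first : ∀ (ha : a.1 ∈ V₁), (G.induce ((S ∩ V₁ : Finset V) : Set V)).Reachable
        ⟨a.1, by rw [Finset.coe_inter]; exact ⟨a.2, Finset.mem_coe.2 ha⟩⟩
        ⟨b.1, by rw [Finset.coe_inter]; exact ⟨b.2, Finset.mem_coe.2 hb⟩⟩ := by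
      intro ha
      by_cases hc : c.1 ∈ V₁
      · have hadj : (G.induce ((S ∩ V₁ : Finset V) : Set V)).Adj
            ⟨a.1, by rw [Finset.coe_inter]; exact ⟨a.2, Finset.mem_coe.2 ha⟩⟩
            ⟨c.1, by rw [Finset.coe_inter]; exact ⟨c.2, Finset.mem_coe.2 hc⟩⟩ := hGadj
        exact hadj.reachable.trans ((ih hb).1 hc)
      · have hc2 : c.1 ∈ V₂ := (hunion c.1).resolve_left hc
        have ha2 : a.1 ∈ V₂ := by
          by_contra ha2
          exact hnoedge a.1 (Finset.mem_sdiff.2 ⟨ha, ha2⟩) c.1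
            (Finset.mem_sdiff.2 ⟨hc2, hc⟩) hGadj
        obtain ⟨x, hx1, hx2, hxS, hxr⟩ := (ih hb).2 hc2
        rcases eq_or_ne a.1 x with heq | hne
        · exact heq ▸ hxr
        · have hadj : G.Adj a.1 x := hclique
            (by rw [Finset.coe_inter]; exact ⟨Finset.mem_coe.2 ha, Finset.mem_coe.2 ha2⟩)
            (by rw [Finset.coe_inter]; exact ⟨Finset.mem_coe.2 hx1, Finset.mem_coe.2 hx2⟩) hne
          have hadj' : (G.induce ((S ∩ V₁ : Finset V) : Set V)).Adj
              ⟨a.1, by rw [Finset.coe_inter]; exact ⟨a.2, Finset.mem_coe.2 ha⟩⟩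
              ⟨x, by rw [Finset.coe_inter]; exact ⟨hxS, Finset.mem_coe.2 hx1⟩⟩ := hadj
          exact hadj'.reachable.trans hxr
    refine ⟨first, fun ha2 => ?_⟩
    by_cases ha : a.1 ∈ V₁
    · exact ⟨a.1, ha, ha2, a.2, first ha⟩
    · by_cases hc : c.1 ∈ V₁
      · have hc2 : c.1 ∈ V₂ := by
          by_contra hc2
          exact hnoedge c.1 (Finset.mem_sdiff.2 ⟨hc, hc2⟩) a.1
            (Finset.mem_sdiff.2 ⟨ha2, ha⟩) hGadj.symm
        exact ⟨c.1, hc, hc2, c.2, (ih hb).1 hc⟩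
      · have hc2 : c.1 ∈ V₂ := (hunion c.1).resolve_left hc
        exact (ih hb).2 hc2

theorem side {V : Type} [Fintype V] [DecidableEq V] (G : SimpleGraph V)
    (V₁ V₂ : Finset V)
    (hunion : ∀ x : V, x ∈ V₁ ∨ x ∈ V₂)
    (hclique : G.IsClique ((V₁ ∩ V₂ : Finset V) : Set V))
    (hnoedge : ∀ a ∈ V₁ \ V₂, ∀ b ∈ V₂ \ V₁, ¬ G.Adj a b)
    (n : ℕ) (F : Fin n → Finset V) (hcov : IsConnCover G F) :
    IsConnCover G fun i : {i : Fin n // (F i ∩ V₁).Nonempty} => F i.1 ∩ V₁ := by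
  obtain ⟨hne, hconn2⟩ := hcov
  refine ⟨fun i => i.2, ?_⟩
  intro σ hσ hσinf
  have hfun : (fun i : {i : Fin n // (F i ∩ V₁).Nonempty} => F i.1 ∩ V₁)
      = (fun i => F i.1) ⊓ (fun _ => V₁) := rfl
  have hT : σ.inf (fun i => F i.1 ∩ V₁) = σ.inf (fun i => F i.1) ∩ V₁ := by
    rw [hfun, Finset.inf_inf, Finset.inf_const hσ, Finset.inf_eq_inter]
  set T := σ.inf (fun i : {i : Fin n // (F i ∩ V₁).Nonempty} => F i.1) with hTdef
  rw [hT] at hσinf ⊢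
  have hTne : T.Nonempty := hσinf.mono Finset.inter_subset_left
  have heq : (σ.image Subtype.val).inf F = T := Finset.inf_image σ Subtype.val F
  have hconnT := hconn2 (σ.image Subtype.val) (hσ.image _) (by rw [heq]; exact hTne)
  rw [heq] at hconnT
  rw [SimpleGraph.connected_iff]
  constructor
  · intro u v
    have hu := Finset.mem_inter.1 (Finset.mem_coe.1 u.2)
    have hv := Finset.mem_inter.1 (Finset.mem_coe.1 v.2)
    obtain ⟨p⟩ := hconnT.preconnected ⟨u.1, Finset.mem_coe.2 hu.1⟩ ⟨v.1, Finset.mem_coe.2 hv.1⟩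
    exact (key_walk G V₁ V₂ hunion hclique hnoedge T _ _ p hv.2).1 hu.2
  · obtain ⟨x, hx⟩ := hσinf
    exact ⟨⟨x, Finset.mem_coe.2 hx⟩⟩

/-- if connected `G` is a clique-sum of `A = G[V₁]` and `B = G[V₂]` and `F`
is a connected cover in `G`, then the families of nonempty intersections
`{G_i ∩ A}` and `{G_i ∩ B}` are connected covers in `A` and in `B` respectively
(members are induced subgraphs contained in `V₁` resp. `V₂`, so being a connected
cover there is the same as being a connected cover in `G`). -/
theorem stmt8 {V : Type} [Fintype V] [DecidableEq V] (G : SimpleGraph V)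
    (V₁ V₂ : Finset V)
    (hunion : V₁ ∪ V₂ = Finset.univ)
    (hinter : (V₁ ∩ V₂).Nonempty)
    (hclique : G.IsClique ((V₁ ∩ V₂ : Finset V) : Set V))
    (hnoedge : ∀ a ∈ V₁ \ V₂, ∀ b ∈ V₂ \ V₁, ¬ G.Adj a b)
    (hconn : G.Connected)
    (n : ℕ) (F : Fin n → Finset V) (hcov : IsConnCover G F) :
    (IsConnCover G fun i : {i : Fin n // (F i ∩ V₁).Nonempty} => F i.1 ∩ V₁) ∧
    (IsConnCover G fun i : {i : Fin n // (F i ∩ V₂).Nonempty} => F i.1 ∩ V₂) := by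
  have hun : ∀ x : V, x ∈ V₁ ∨ x ∈ V₂ := fun x => by
    have hx : x ∈ V₁ ∪ V₂ := hunion ▸ Finset.mem_univ x
    exact Finset.mem_union.1 hx
  refine ⟨side G V₁ V₂ hun hclique hnoedge n F hcov, ?_⟩
  exact side G V₂ V₁ (fun x => (hun x).symm)
    (by rwa [Finset.inter_comm]) (fun a ha b hb h => hnoedge b hb a ha h.symm) n F hcov
end

section
/- Let G be a 2-connected planar graph embedded in the sphere and let H be a 2-connected induced subgraph of G. Let f be a face of H and let U be the set of vertices of G lying in the open interior of f. Then the induced subgraph H' = G[V(H) ∪ U] (obtained from H by filling the face f) is 2-connected. -/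
open Finset

/-- A plane (equivalently, sphere) embedding of the simple graph `G`: vertices are
distinct points of the plane, each edge is drawn as a simple arc between the images of
its endpoints, arcs meet vertex points only at their endpoints, and two arcs of distinct
edges meet only in common endpoints. -/
structure PlaneEmbedding {V : Type} (G : SimpleGraph V) where
  pos : V → ℝ × ℝ
  inj : Function.Injective pos
  arc : ∀ u v, G.Adj u v → Path (pos u) (pos v)
  arc_inj : ∀ u v (h : G.Adj u v), Function.Injective ⇑(arc u v h)
  arc_symm : ∀ u v (h : G.Adj u v), Set.range ⇑(arc v u h.symm) = Set.range ⇑(arc u v h)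
  arc_vertex : ∀ u v (h : G.Adj u v) (w : V),
    pos w ∈ Set.range ⇑(arc u v h) → w = u ∨ w = v
  arc_disj : ∀ u v (h : G.Adj u v) u' v' (h' : G.Adj u' v'), s(u, v) ≠ s(u', v') →
    Set.range ⇑(arc u v h) ∩ Set.range ⇑(arc u' v' h') ⊆
      ({pos u, pos v} : Set (ℝ × ℝ)) ∩ {pos u', pos v'}

/-- The drawing (point set in the plane) of the subgraph of `G` induced by `S`. -/
def drawing {V : Type} {G : SimpleGraph V} (E : PlaneEmbedding G) (S : Set V) :
    Set (ℝ × ℝ) :=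
  (E.pos '' S) ∪
    ⋃ u, ⋃ v, ⋃ (_ : u ∈ S), ⋃ (_ : v ∈ S), ⋃ (h : G.Adj u v), Set.range ⇑(E.arc u v h)

/-- `f` is a face of the induced subgraph on `S` in the embedding `E`: a connected
component of the complement of its drawing. -/
def IsFaceOf {V : Type} {G : SimpleGraph V} (E : PlaneEmbedding G) (S : Set V)
    (f : Set (ℝ × ℝ)) : Prop :=
  ∃ x ∈ (drawing E S)ᶜ, f = connectedComponentIn (drawing E S)ᶜ x

/-- The induced subgraph of `G` on `S` is 2-connected: it has at least 3 vertices and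
deleting any single vertex leaves it connected. -/
def TwoConnectedOn {V : Type} (G : SimpleGraph V) (S : Set V) : Prop :=
  3 ≤ S.ncard ∧ ∀ v ∈ S, (G.induce (S \ {v})).Connected

/-! A vertex drawn inside the face `f` is not in `S`, and an edge from it to a vertex outside
`S` is an arc avoiding the drawing of `G[S]`, so both ends lie in `f`.  Hence, after deleting a
vertex `v`, a path of `G - v` from a vertex in `f` to `S` stays in `f` until its first hit of
`S`, and `G[S \ {v}]` is connected since `G[S]` is 2-connected. -/

namespace SimpleGraph

variable {V : Type} {G : SimpleGraph V} {W A B : Set V}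

theorem Walk.exists_reachable_induce_union {x y : W} (p : (G.induce W).Walk x y)
    (hB : ∀ b ∈ B, ∀ w ∈ W, G.Adj b w → w ∈ A ∪ B) (hy : y.1 ∈ A)
    (hx : x.1 ∈ A ∪ B) :
    ∃ a : ↥(A ∪ B), a.1 ∈ A ∧ (G.induce (A ∪ B)).Reachable ⟨x.1, hx⟩ a := by
  induction p with
  | nil => exact ⟨⟨_, hx⟩, hy, .rfl⟩
  | @cons x z y hxz q ih =>
    by_cases hxA : x.1 ∈ A
    · exact ⟨⟨_, hx⟩, hxA, .rfl⟩
    · have hzAB : z.1 ∈ A ∪ B := hB x (hx.resolve_left hxA) z z.2 hxz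
      obtain ⟨a, haA, hza⟩ := ih hy hzAB
      have hxz' : (G.induce (A ∪ B)).Adj ⟨x, hx⟩ ⟨z, hzAB⟩ := hxz
      exact ⟨a, haA, hxz'.reachable.trans hza⟩

theorem induce_union_connected_of_forall_adj (hW : (G.induce W).Preconnected)
    (hA : (G.induce A).Connected) (hAW : A ⊆ W) (hBW : B ⊆ W)
    (hB : ∀ b ∈ B, ∀ w ∈ W, G.Adj b w → w ∈ A ∪ B) :
    (G.induce (A ∪ B)).Connected := by
  obtain ⟨a₀⟩ := hA.nonempty
  refine (connected_iff_exists_forall_reachable _).mpr ⟨⟨a₀, Or.inl a₀.2⟩, fun z ↦ ?_⟩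
  have hzW : z.1 ∈ W := Set.union_subset hAW hBW z.2
  obtain ⟨p⟩ := hW ⟨z, hzW⟩ ⟨a₀, hAW a₀.2⟩
  obtain ⟨a, haA, hza⟩ := p.exists_reachable_induce_union hB a₀.2 z.2
  have ha₀a : (G.induce (A ∪ B)).Reachable ⟨a₀, Or.inl a₀.2⟩ a :=
    (hA.preconnected a₀ ⟨a, haA⟩).map (induceHomOfLE G Set.subset_union_left).toHom
  exact ha₀a.trans hza.symm

end SimpleGraph

theorem TwoConnectedOn.connected {V : Type} {G : SimpleGraph V} {S : Set V}
    (hS : TwoConnectedOn G S) : (G.induce S).Connected := by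
  obtain ⟨a, b, c, ha, hb, hc, hab, hac, hbc⟩ :=
    (Set.two_lt_ncard_iff (Set.finite_of_ncard_pos (by linarith [hS.1]))).mp hS.1
  have hS_eq : S = (S \ {a}) ∪ (S \ {b}) := by
    ext x
    by_cases hxa : x = a <;> simp +contextual [hxa, hab]
  rw [hS_eq]
  exact SimpleGraph.induce_union_connected (hS.2 a ha).preconnected (hS.2 b hb).preconnected
    ⟨c, ⟨hc, hac.symm⟩, ⟨hc, hbc.symm⟩⟩

namespace PlaneEmbedding

variable {V : Type} {G : SimpleGraph V} (E : PlaneEmbedding G) {S : Set V}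

theorem range_arc_subset_compl_drawing {u w : V} (h : G.Adj u w) (hu : u ∉ S) (hw : w ∉ S) :
    Set.range (E.arc u w h) ⊆ (drawing E S)ᶜ := by
  rintro p ⟨t, rfl⟩ hp
  have not_vertex : E.arc u w h t ∉ E.pos '' S := by
    rintro ⟨s, hs, hps⟩
    rcases E.arc_vertex u w h s ⟨t, hps.symm⟩ with rfl | rfl
    exacts [hu hs, hw hs]
  rcases hp with hp | hp
  · exact not_vertex hp
  · simp only [Set.mem_iUnion] at hp
    obtain ⟨a, b, haS, hbS, hab, hp⟩ := hp
    have hne : s(u, w) ≠ s(a, b) := by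
      rw [Ne, Sym2.eq_iff]
      rintro (⟨rfl, -⟩ | ⟨rfl, -⟩)
      exacts [hu haS, hu hbS]
    obtain ⟨-, hp | hp⟩ := E.arc_disj u w h a b hab hne ⟨⟨t, rfl⟩, hp⟩
    exacts [not_vertex ⟨a, haS, hp.symm⟩, not_vertex ⟨b, hbS, hp.symm⟩]

end PlaneEmbedding

namespace IsFaceOf

variable {V : Type} {G : SimpleGraph V} {E : PlaneEmbedding G} {S : Set V} {f : Set (ℝ × ℝ)}

theorem subset_compl_drawing (hf : IsFaceOf E S f) : f ⊆ (drawing E S)ᶜ := by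
  obtain ⟨x, -, rfl⟩ := hf
  exact connectedComponentIn_subset _ _

theorem notMem_of_pos_mem (hf : IsFaceOf E S f) {u : V} (hu : E.pos u ∈ f) : u ∉ S :=
  fun huS ↦ hf.subset_compl_drawing hu (Or.inl ⟨u, huS, rfl⟩)

theorem pos_mem_of_adj (hf : IsFaceOf E S f) {u w : V} (h : G.Adj u w) (hu : E.pos u ∈ f)
    (hw : w ∉ S) : E.pos w ∈ f := by
  have harc := E.range_arc_subset_compl_drawing h (hf.notMem_of_pos_mem hu) hw
  obtain ⟨x, -, rfl⟩ := hf
  rw [connectedComponentIn_eq hu]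
  exact (isPreconnected_range (E.arc u w h).continuous).subset_connectedComponentIn
    ⟨0, (E.arc u w h).source⟩ harc ⟨1, (E.arc u w h).target⟩

end IsFaceOf

theorem stmt11_general {V : Type} [Fintype V] (G : SimpleGraph V)
    (E : PlaneEmbedding G) (hG : TwoConnectedOn G Set.univ)
    (S : Set V) (hH : TwoConnectedOn G S)
    (f : Set (ℝ × ℝ)) (hf : IsFaceOf E S f) :
    TwoConnectedOn G (S ∪ {w : V | E.pos w ∈ f}) := by
  constructor
  · exact hH.1.trans (Set.ncard_le_ncard Set.subset_union_left)
  intro v _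
  have hSv : (G.induce (S \ {v})).Connected := by
    by_cases hvS : v ∈ S
    · exact hH.2 v hvS
    · rw [Set.sdiff_singleton_eq_self hvS]
      exact hH.connected
  rw [Set.union_sdiff_distrib]
  have hsub : ∀ X : Set V, X \ {v} ⊆ Set.univ \ {v} :=
    fun X ↦ Set.sdiff_subset_sdiff_left (Set.subset_univ X)
  refine SimpleGraph.induce_union_connected_of_forall_adj (hG.2 v trivial).preconnected hSv
    (hsub S) (hsub _) ?_
  rintro b ⟨hb, -⟩ w ⟨-, hwv⟩ hbw
  by_cases hwS : w ∈ S
  · exact Or.inl ⟨hwS, hwv⟩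
  · exact Or.inr ⟨hf.pos_mem_of_adj hbw hb hwS, hwv⟩

/-- let `G` be a 2-connected planar graph with a fixed embedding, `H = G[S]`
a 2-connected induced subgraph, `f` a face of `H`, and `U` the set of vertices of `G`
drawn in the interior of `f`.  Then the induced subgraph `G[S ∪ U]`, obtained by filling
the face `f`, is 2-connected. -/
theorem stmt11 {V : Type} [Fintype V] [DecidableEq V] (G : SimpleGraph V)
    (E : PlaneEmbedding G) (hG : TwoConnectedOn G Set.univ)
    (S : Set V) (hH : TwoConnectedOn G S)
    (f : Set (ℝ × ℝ)) (hf : IsFaceOf E S f) :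
    TwoConnectedOn G (S ∪ {w : V | E.pos w ∈ f}) :=
  stmt11_general G E hG S hH f hf
end
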